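/- Let $(\tilde\phi_t)_{t\ge 0}$ be a Markov chain taking values in finite subsets of $\mathbb{Z}$ such that $M_t := (1-\rho)^{|\tilde\phi_t|}$ is a bounded martingale for some $\rho \in (0,1)$, and suppose there exists $\delta > 0$ such that $\mathbb{P}(|\tilde\phi_{t+1}| \neq |\tilde\phi_t| \mid \tilde\phi_t = B) \ge \delta$ whenever $0 < |B| < \infty$. Then for every initial state $\tilde\phi_0 = B$ with $|B| < \infty$, $\mathbb{P}(\tilde\phi_u = \emptyset \text{ for some } u \ge 0) = (1-\rho)^{|B|}$. -/
import Mathlib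


open MeasureTheory ProbabilityTheory Filter Topology

/-- Let `(φ_t)` be a Markov chain on finite subsets of `ℤ` for which
`M_t = (1-ρ)^{|φ_t|}` is a (bounded) martingale, the empty set is absorbing, and the
size fluctuates with conditional probability at least `δ > 0` whenever `0 < |φ_t| < ∞`.
Then starting from `φ₀ = B`, `P(φ_u = ∅ for some u) = (1-ρ)^{|B|}`. -/
theorem extinction_probability
    {Ω : Type*} [mΩ : MeasurableSpace Ω] (μ : Measure Ω) [IsProbabilityMeasure μ]
    (ℱ : Filtration ℕ mΩ) (φ : ℕ → Ω → Finset ℤ)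
    (ρ δ : ℝ) (hρ0 : 0 < ρ) (hρ1 : ρ < 1) (hδ : 0 < δ)
    -- `(1-ρ)^{|φ_t|}` is a martingale
    (hmart : Martingale (fun (t : ℕ) (ω : Ω) => (1 - ρ) ^ (φ t ω).card) ℱ μ)
    -- the empty set is absorbing
    (habs : ∀ ω t, φ t ω = ∅ → φ (t + 1) ω = ∅)
    -- conditional fluctuation bound given the present state, when nonempty
    (hfluct : ∀ t : ℕ, ∀ᵐ ω ∂μ, φ t ω ≠ ∅ →
      δ ≤ (μ[Set.indicator {ω' | (φ (t + 1) ω').card ≠ (φ t ω').card}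
            (fun _ => (1 : ℝ)) | ℱ t]) ω)
    (B : Finset ℤ) (h0 : ∀ ω, φ 0 ω = B) :
    μ {ω | ∃ u : ℕ, φ u ω = ∅} = ENNReal.ofReal ((1 - ρ) ^ B.card) := by
  classical
  set q : ℝ := 1 - ρ with hqdef
  have hq0 : 0 < q := by simp only [hqdef]; linarith
  have hq1 : q < 1 := by simp only [hqdef]; linarith
  set f : ℕ → Ω → ℝ := fun t ω => q ^ (φ t ω).card with hfdef
  have hanti : StrictAnti (fun n : ℕ => q ^ n) := pow_right_strictAnti₀ hq0 hq1
  have hinj : Function.Injective (fun n : ℕ => q ^ n) := hanti.injective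
  have hpos : ∀ t ω, 0 < f t ω := fun t ω => pow_pos hq0 _
  have hle1 : ∀ t ω, f t ω ≤ 1 := fun t ω => pow_le_one₀ hq0.le hq1.le
  have hempty : ∀ t ω, φ t ω = ∅ ↔ f t ω = 1 := by
    intro t ω
    constructor
    · intro h; simp [hfdef, h]
    · intro h
      have : q ^ (φ t ω).card = q ^ 0 := by simpa using h
      have := hinj this
      simpa [Finset.card_eq_zero] using this
  -- the extinction event
  set E : Set Ω := {ω | ∃ u : ℕ, φ u ω = ∅} with hEdef
  have hEmeas : MeasurableSet E := by
    have : E = ⋃ u, f u ⁻¹' {1} := by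
      ext ω; simp only [hEdef, Set.mem_setOf_eq, Set.mem_iUnion, Set.mem_preimage,
        Set.mem_singleton_iff]
      exact exists_congr fun u => hempty u ω
    rw [this]
    exact MeasurableSet.iUnion fun u =>
      ℱ.le u _ ((hmart.stronglyAdapted u).measurable (measurableSet_singleton 1))
  -- fluctuation sets
  set s : ℕ → Set Ω := fun n => {ω | f n ω ≠ f (n - 1) ω} with hsdef
  have hs : ∀ n, MeasurableSet[ℱ n] (s n) := by
    intro n
    have h1 : Measurable[ℱ n] (f n) := (hmart.stronglyAdapted n).measurable
    have h2 : Measurable[ℱ n] (f (n - 1)) :=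
      ((hmart.stronglyAdapted (n - 1)).mono (ℱ.mono (Nat.sub_le n 1))).measurable
    exact (measurableSet_eq_fun h1 h2).compl
  have hsets : ∀ t : ℕ, {ω' | (φ (t + 1) ω').card ≠ (φ t ω').card} = s (t + 1) := by
    intro t
    ext ω
    simp only [hsdef, Set.mem_setOf_eq, Nat.add_sub_cancel]
    exact hinj.ne_iff.symm
  -- absorbing: once empty, always empty
  have habs' : ∀ ω u t, u ≤ t → φ u ω = ∅ → φ t ω = ∅ := by
    intro ω u t hut hu
    induction t with
    | zero => exact (Nat.le_zero.mp hut) ▸ hu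
    | succ n ih =>
      rcases Nat.lt_or_ge u (n + 1) with h | h
      · exact habs ω n (ih (Nat.lt_succ_iff.mp h))
      · exact (Nat.le_antisymm hut h) ▸ hu
  -- L¹ bound
  have hbdd : ∀ n, eLpNorm (f n) 1 μ ≤ ((1 : NNReal) : ENNReal) := by
    intro n
    refine (eLpNorm_le_of_ae_bound (C := 1) ?_).trans ?_
    · filter_upwards with ω
      rw [Real.norm_eq_abs, abs_of_pos (hpos n ω)]
      exact hle1 n ω
    · simp
  -- martingale convergence
  have hconv : ∀ᵐ ω ∂μ, ∃ c, Tendsto (fun n => f n ω) atTop (𝓝 c) :=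
    hmart.submartingale.exists_ae_tendsto_of_bdd hbdd
  -- Lévy's generalized Borel–Cantelli
  have hBC := ae_mem_limsup_atTop_iff μ hs
  have hfluct' : ∀ᵐ ω ∂μ, ∀ t, φ t ω ≠ ∅ →
      δ ≤ (μ[(s (t + 1)).indicator (1 : Ω → ℝ) | ℱ t]) ω := by
    rw [ae_all_iff]
    intro t
    filter_upwards [hfluct t] with ω h
    rw [← hsets t]
    exact h
  -- main pointwise claim
  have hmain : ∀ᵐ ω ∂μ, Tendsto (fun n => f n ω) atTop
      (𝓝 (E.indicator (fun _ => (1 : ℝ)) ω)) := by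
    filter_upwards [hconv, hBC, hfluct'] with ω hc hbc hfl
    obtain ⟨c, hc⟩ := hc
    by_cases hE : ω ∈ E
    · rw [Set.indicator_of_mem hE]
      obtain ⟨u, hu⟩ := hE
      have : (fun n => f n ω) =ᶠ[atTop] fun _ => (1 : ℝ) := by
        filter_upwards [eventually_ge_atTop u] with n hn
        exact (hempty n ω).mp (habs' ω u n hn hu)
      exact Tendsto.congr' this.symm tendsto_const_nhds
    · rw [Set.indicator_of_notMem hE]
      simp only [hEdef, Set.mem_setOf_eq, not_exists] at hE
      -- divergence of conditional probabilities
      have hdiv : Tendsto (fun n => ∑ k ∈ Finset.range n,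
          (μ[(s (k + 1)).indicator (1 : Ω → ℝ) | ℱ k]) ω) atTop atTop := by
        refine tendsto_atTop_mono (f := fun n : ℕ => (n : ℝ) * δ) ?_ ?_
        · intro n
          calc (n : ℝ) * δ = (Finset.range n).card • δ := by
                simp [nsmul_eq_mul]
            _ ≤ ∑ k ∈ Finset.range n,
                (μ[(s (k + 1)).indicator (1 : Ω → ℝ) | ℱ k]) ω :=
                Finset.card_nsmul_le_sum _ _ _ (fun k _ => hfl k (hE k))
        · exact Tendsto.atTop_mul_const hδ tendsto_natCast_atTop_atTop
      have hio : ∃ᶠ n in atTop, ω ∈ s n :=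
        mem_limsup_iff_frequently_mem.mp (hbc.mpr hdiv)
      -- show the limit is 0
      have hc0 : c = 0 := by
        by_contra hne
        have hcpos : 0 < c :=
          lt_of_le_of_ne (ge_of_tendsto' hc fun n => (hpos n ω).le) (Ne.symm hne)
        obtain ⟨N, hN⟩ := exists_pow_lt_of_lt_one hcpos hq1
        have hev : ∀ᶠ n in atTop, q ^ N < f n ω := hc.eventually_const_lt hN
        have hcard : ∀ᶠ n in atTop, (φ n ω).card < N := by
          filter_upwards [hev] with n hn
          by_contra h'
          push_neg at h'
          exact absurd (hanti.antitone h') (not_le.mpr hn)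
        -- successive differences tend to 0
        have hsub : Tendsto (fun n => f n ω - f (n - 1) ω) atTop (𝓝 0) := by
          have h2 : Tendsto (fun n : ℕ => f (n - 1) ω) atTop (𝓝 c) :=
            hc.comp (tendsto_sub_atTop_nat 1)
          simpa using hc.sub h2
        set ε₀ : ℝ := q ^ N * (1 - q) with hε₀def
        have hε₀ : 0 < ε₀ := mul_pos (pow_pos hq0 N) (by linarith)
        have hgap : ∀ a b : ℕ, a < b → a ≤ N → ε₀ ≤ q ^ a - q ^ b := by
          intro a b hab haN
          have h1 : q ^ b ≤ q ^ (a + 1) := hanti.antitone hab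
          have h2 : q ^ N ≤ q ^ a := hanti.antitone haN
          calc ε₀ ≤ q ^ a * (1 - q) :=
                mul_le_mul_of_nonneg_right h2 (by linarith)
            _ = q ^ a - q ^ (a + 1) := by rw [mul_sub, mul_one, ← pow_succ]
            _ ≤ q ^ a - q ^ b := by linarith
        -- extract a contradiction
        obtain ⟨T, hT⟩ := eventually_atTop.mp hcard
        have hsmall : ∀ᶠ n in atTop, |f n ω - f (n - 1) ω| < ε₀ := by
          have := hsub.eventually (eventually_abs_sub_lt 0 hε₀)
          simpa using this
        have hboth : ∀ᶠ n in atTop, |f n ω - f (n - 1) ω| < ε₀ ∧ T + 1 ≤ n := by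
          exact hsmall.and (eventually_ge_atTop (T + 1))
        obtain ⟨n, hns, hlt, hTn⟩ := (hio.and_eventually hboth).exists
        have hcn : (φ n ω).card < N := hT n (by omega)
        have hcn1 : (φ (n - 1) ω).card < N := hT (n - 1) (by omega)
        have hnecard : (φ n ω).card ≠ (φ (n - 1) ω).card := fun h => hns (by
          simp only [hfdef]; rw [h])
        rcases Nat.lt_or_ge (φ n ω).card (φ (n - 1) ω).card with h | h
        · have := hgap _ _ h hcn.le
          have habs2 : ε₀ ≤ |f n ω - f (n - 1) ω| := le_trans this (le_abs_self _)
          exact absurd habs2 (not_le.mpr hlt)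
        · have hlt2 : (φ (n - 1) ω).card < (φ n ω).card := lt_of_le_of_ne h (Ne.symm hnecard)
          have := hgap _ _ hlt2 hcn1.le
          have habs2 : ε₀ ≤ |f n ω - f (n - 1) ω| := by
            rw [abs_sub_comm]
            exact le_trans this (le_abs_self _)
          exact absurd habs2 (not_le.mpr hlt)
      rw [← hc0]
      exact hc
  -- expectations are constant
  have hint : ∀ n, ∫ ω, f n ω ∂μ = q ^ B.card := by
    intro n
    have h1 : ∫ ω, f n ω ∂μ = ∫ ω, f 0 ω ∂μ :=
      calc ∫ ω, f n ω ∂μ = ∫ ω, (μ[f n|ℱ 0]) ω ∂μ := (integral_condExp (ℱ.le 0)).symm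
        _ = ∫ ω, f 0 ω ∂μ := integral_congr_ae (hmart.condExp_ae_eq (Nat.zero_le n))
    rw [h1]
    have : (fun ω => f 0 ω) = fun _ : Ω => q ^ B.card := by
      funext ω; simp [hfdef, h0 ω]
    rw [this, integral_const]
    simp
  -- bounded convergence
  have hlim : Tendsto (fun n => ∫ ω, f n ω ∂μ) atTop
      (𝓝 (∫ ω, E.indicator (fun _ => (1 : ℝ)) ω ∂μ)) := by
    refine tendsto_integral_of_dominated_convergence (fun _ => (1 : ℝ)) ?_ ?_ ?_ hmain
    · exact fun n => ((hmart.stronglyAdapted n).mono (ℱ.le n)).aestronglyMeasurable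
    · exact integrable_const 1
    · intro n
      filter_upwards with ω
      rw [Real.norm_eq_abs, abs_of_pos (hpos n ω)]
      exact hle1 n ω
  have hconst : Tendsto (fun n => ∫ ω, f n ω ∂μ) atTop (𝓝 (q ^ B.card)) := by
    simp only [hint]
    exact tendsto_const_nhds
  have hkey : ∫ ω, E.indicator (fun _ => (1 : ℝ)) ω ∂μ = q ^ B.card :=
    tendsto_nhds_unique hlim hconst
  have hind : ∫ ω, E.indicator (fun _ => (1 : ℝ)) ω ∂μ = (μ E).toReal :=
    integral_indicator_one hEmeas
  have : (μ E).toReal = q ^ B.card := by rw [← hind, hkey]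
  calc μ E = ENNReal.ofReal ((μ E).toReal) :=
        (ENNReal.ofReal_toReal (measure_ne_top μ E)).symm
    _ = ENNReal.ofReal (q ^ B.card) := by rw [this]
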